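/- Let λ_1, λ_2 be weakly decreasing finitely supported sequences of natural numbers, ε_1, ε_2 ∈ {0,1}, and d ∈ ℕ. Let k > 0 satisfy k ≢ d (mod 2) and λ_{1,k} ≥ λ_{1,k+1} + 2, and let λ_1' be obtained from λ_1 by decreasing the first k entries by 2. Then the sequence ξ' formed from (λ_1', λ_2) with the data (ε_1, ε_2, d) equals the sequence ξ formed from (λ_1, λ_2) with the same data; consequently W(λ_1',λ_2)_j = W(λ_1,λ_2)_j − 2 for j ≤ k and W(λ_1',λ_2)_j = W(λ_1,λ_2)_j for j > k. -/

import Mathlib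

/-- `f` is a partition of `d`: weakly decreasing, finitely many nonzero terms, total sum `d`.
    Indexing is 0-based: `f j` is the `(j+1)`-st part. -/
def IsPartitionOf (f : ℕ → ℕ) (d : ℕ) : Prop :=
  Antitone f ∧ ∃ N, (∀ j, N ≤ j → f j = 0) ∧ ∑ j ∈ Finset.range N, f j = d

/-- Transpose of a partition (0-based): `ptrans f k` = #{j : f j ≥ k+1}, i.e. `(f^t)_{k+1}`. -/
noncomputable def ptrans (f : ℕ → ℕ) : ℕ → ℕ := fun k => Nat.card {j : ℕ // k + 1 ≤ f j}

/-- Multiplicity of the part `k` in `f` (meaningful for `k > 0`). -/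
noncomputable def pmult (f : ℕ → ℕ) (k : ℕ) : ℕ := Nat.card {j : ℕ // f j = k}

/-- Orthogonal: every even positive part occurs with even multiplicity. -/
def IsOrthogonal (f : ℕ → ℕ) : Prop := ∀ k, 0 < k → Even k → Even (pmult f k)

/-- Symplectic: every odd positive part occurs with even multiplicity. -/
def IsSymplectic (f : ℕ → ℕ) : Prop := ∀ k, 0 < k → Odd k → Even (pmult f k)

/-- Dominance order for ℕ-valued sequences. -/
def NDomLE (f g : ℕ → ℕ) : Prop :=
  ∀ N, ∑ j ∈ Finset.range N, f j ≤ ∑ j ∈ Finset.range N, g j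

/-- Dominance order for ℤ-valued sequences. -/
def DomLE (f g : ℕ → ℤ) : Prop :=
  ∀ N, ∑ j ∈ Finset.range N, f j ≤ ∑ j ∈ Finset.range N, g j

/-- `ν` is the `P`-collapse of `μ` (both of total size `m`): `ν` is a partition of `m`
    satisfying `P`, `ν ≤ μ`, and every partition `σ` of `m` satisfying `P` with `σ ≤ μ`
    satisfies `σ ≤ ν`. -/
def IsCollapse (P : (ℕ → ℕ) → Prop) (m : ℕ) (μ ν : ℕ → ℕ) : Prop :=
  IsPartitionOf ν m ∧ P ν ∧ NDomLE ν μ ∧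
    ∀ σ, IsPartitionOf σ m → P σ → NDomLE σ μ → NDomLE σ ν

/-- B-collapse (largest orthogonal partition below `μ`, `m` odd). -/
def IsBCollapse : ℕ → (ℕ → ℕ) → (ℕ → ℕ) → Prop := IsCollapse IsOrthogonal
/-- C-collapse (largest symplectic partition below `μ`, `m` even). -/
def IsCCollapse : ℕ → (ℕ → ℕ) → (ℕ → ℕ) → Prop := IsCollapse IsSymplectic
/-- D-collapse (largest orthogonal partition below `μ`, `m` even). -/
def IsDCollapse : ℕ → (ℕ → ℕ) → (ℕ → ℕ) → Prop := IsCollapse IsOrthogonal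

/-- `μ^−` : decrease the smallest nonzero part by 1. -/
def minusOne (f : ℕ → ℕ) : ℕ → ℕ :=
  fun j => if 0 < f j ∧ f (j+1) = 0 then f j - 1 else f j

/-- `μ^+` : increase the largest part by 1. -/
def plusOne (f : ℕ → ℕ) : ℕ → ℕ := fun j => if j = 0 then f 0 + 1 else f j

/-- `u = f ∪ g` : `u` is weakly decreasing, finitely supported, and every positive
    part occurs in `u` with multiplicity the sum of its multiplicities in `f` and `g`. -/
def IsUnionOf (u f g : ℕ → ℕ) : Prop :=
  Antitone u ∧ (∃ N, ∀ j, N ≤ j → u j = 0) ∧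
    ∀ k, 0 < k → pmult u k = pmult f k + pmult g k

/-- The sequence ξ attached to `(f, g, ε₁, ε₂, d)`.  Index `j` here corresponds to the
    1-based index `j+1` of the paper. -/
def xiSeq (f g : ℕ → ℕ) (e1 e2 d : ℕ) : ℕ → ℤ := fun j =>
  if (j + 1) % 2 = (d + 1) % 2 ∧ f j % 2 = e1 ∧ g j % 2 = e2 ∧
      (j = 0 ∨ f j + g j < f (j - 1) + g (j - 1)) then 1
  else if (j + 1) % 2 = d % 2 ∧ f j % 2 = e1 ∧ g j % 2 = e2 ∧
      f (j + 1) + g (j + 1) < f j + g j then -1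
  else 0

/-- The Waldspurger sequence `W(f,g) = f + g + ξ` (ℤ-valued a priori). -/
def wald (f g : ℕ → ℕ) (e1 e2 d : ℕ) : ℕ → ℤ :=
  fun j => (f j : ℤ) + (g j : ℤ) + xiSeq f g e1 e2 d j

/-- Decrease the first `k` parts of `f` by 2. -/
def stripTwo (f : ℕ → ℕ) (k : ℕ) : ℕ → ℕ := fun j => if j < k then f j - 2 else f j

theorem xiSeq_congr_left {f f' g : ℕ → ℕ} {e1 e2 d j : ℕ} (hmod : f' j % 2 = f j % 2)
    (hup : (j + 1) % 2 = (d + 1) % 2 → 0 < j →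
      (f' j + g j < f' (j - 1) + g (j - 1) ↔ f j + g j < f (j - 1) + g (j - 1)))
    (hdown : (j + 1) % 2 = d % 2 →
      (f' (j + 1) + g (j + 1) < f' j + g j ↔ f (j + 1) + g (j + 1) < f j + g j)) :
    xiSeq f' g e1 e2 d j = xiSeq f g e1 e2 d j := by
  unfold xiSeq
  rw [hmod]
  split_ifs <;> grind

theorem stripTwo_cases {f : ℕ → ℕ} {k : ℕ} (hf : Antitone f) (hstep : f k + 2 ≤ f (k - 1))
    (m : ℕ) : (m < k ∧ stripTwo f k m + 2 = f m) ∨ (k ≤ m ∧ stripTwo f k m = f m) := by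
  by_cases hm : m < k
  · have := hf (show m ≤ k - 1 by omega)
    exact Or.inl ⟨hm, by simp only [stripTwo, if_pos hm]; omega⟩
  · exact Or.inr ⟨by omega, if_neg hm⟩

/-- Shifting the first `k` parts by `2` preserves all parities and all comparisons except the
one between indices `k - 1` and `k`, which `ξ` never tests when `k ≢ d (mod 2)`. -/
theorem xiSeq_stripTwo {f g : ℕ → ℕ} {k e1 e2 d : ℕ} (hf : Antitone f)
    (hstep : f k + 2 ≤ f (k - 1)) (hpar : k % 2 ≠ d % 2) :
    xiSeq (stripTwo f k) g e1 e2 d = xiSeq f g e1 e2 d := by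
  funext j
  have hprev := stripTwo_cases hf hstep (j - 1)
  have hcur := stripTwo_cases hf hstep j
  have hnext := stripTwo_cases hf hstep (j + 1)
  apply xiSeq_congr_left <;> omega

theorem stmt15_general (d k e1 e2 : ℕ) (lam1 lam2 : ℕ → ℕ)
    (h1a : Antitone lam1)
    (hpar : k % 2 ≠ d % 2)
    (hstep : lam1 k + 2 ≤ lam1 (k-1)) :
    (∀ j, xiSeq (stripTwo lam1 k) lam2 e1 e2 d j = xiSeq lam1 lam2 e1 e2 d j) ∧
    (∀ j, j < k →
      wald (stripTwo lam1 k) lam2 e1 e2 d j = wald lam1 lam2 e1 e2 d j - 2) ∧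
    (∀ j, k ≤ j →
      wald (stripTwo lam1 k) lam2 e1 e2 d j = wald lam1 lam2 e1 e2 d j) := by
  have hxi := xiSeq_stripTwo (g := lam2) (e1 := e1) (e2 := e2) h1a hstep hpar
  refine ⟨congrFun hxi, fun j hj => ?_, fun j hj => ?_⟩ <;>
    simp only [wald, hxi] <;> rcases stripTwo_cases h1a hstep j with h | h <;> omega

/-- `λ₁, λ₂` weakly decreasing finitely supported, `ε₁, ε₂ ∈ {0,1}`,
`k > 0` with `k ≢ d (mod 2)` and `λ_{1,k} ≥ λ_{1,k+1}+2` (1-based).  If `λ₁'` is `λ₁`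
with the first `k` entries decreased by 2, then `ξ' = ξ`, hence
`W(λ₁',λ₂)_j = W(λ₁,λ₂)_j − 2` for `j ≤ k` and `W(λ₁',λ₂)_j = W(λ₁,λ₂)_j` for `j > k`. -/
theorem stmt15 (d k e1 e2 : ℕ) (lam1 lam2 : ℕ → ℕ)
    (h1a : Antitone lam1) (h1f : ∃ N, ∀ j, N ≤ j → lam1 j = 0)
    (h2a : Antitone lam2) (h2f : ∃ N, ∀ j, N ≤ j → lam2 j = 0)
    (he1 : e1 = 0 ∨ e1 = 1) (he2 : e2 = 0 ∨ e2 = 1)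
    (hk : 0 < k) (hpar : k % 2 ≠ d % 2)
    (hstep : lam1 k + 2 ≤ lam1 (k-1)) :
    (∀ j, xiSeq (stripTwo lam1 k) lam2 e1 e2 d j = xiSeq lam1 lam2 e1 e2 d j) ∧
    (∀ j, j < k →
      wald (stripTwo lam1 k) lam2 e1 e2 d j = wald lam1 lam2 e1 e2 d j - 2) ∧
    (∀ j, k ≤ j →
      wald (stripTwo lam1 k) lam2 e1 e2 d j = wald lam1 lam2 e1 e2 d j) :=
  stmt15_general d k e1 e2 lam1 lam2 h1a hpar hstep
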